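/- arXiv:1310.5317 — 3 statements merged into one kernel-verified Lean document; each statement's English description precedes it below -/
import Mathlib

section
/- Let k ≥ 2 be an integer. If a graph Σ admits a nowhere-zero k-flow, then every multicover Γ of Σ admits a nowhere-zero k-flow. -/
/-- A graph admits a nowhere-zero `k`-flow. -/
def HasNowhereZeroFlow {V : Type*} [Fintype V] (Γ : SimpleGraph V) (k : ℕ) : Prop :=
  ∃ f : V → V → ℤ,
    (∀ u v, f u v = - f v u) ∧
    (∀ u v, ¬ Γ.Adj u v → f u v = 0) ∧
    (∀ u v, Γ.Adj u v → f u v ≠ 0 ∧ |f u v| < (k : ℤ)) ∧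
    (∀ u, ∑ v, f u v = 0)

/-! The flow on `Γ` is the pullback `f u v = g (p u) (p v)` along the edges of `Γ` of a flow `g`
on the quotient. Conservation at a vertex `u` in block `P` holds because each neighbouring block `Q`
contributes exactly `t` edges carrying the value `g P Q`, so the outflow at `u` is `t` times the
outflow of `g` at `P`. -/

open Finset

section

variable {V ι M : Type*}

theorem Finset.sum_comp_eq_nsmul_sum [Fintype ι] [DecidableEq ι] [AddCommMonoid M]
    (s : Finset V) (p : V → ι) (h : ι → M) (t : ℕ)
    (hfiber : ∀ j, h j ≠ 0 → #{v ∈ s | p v = j} = t) :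
    ∑ v ∈ s, h (p v) = t • ∑ j, h j := by
  rw [← sum_fiberwise s p, smul_sum]
  refine sum_congr rfl fun j _ => ?_
  rw [sum_congr rfl fun v hv => congrArg h (mem_filter.1 hv).2, sum_const]
  by_cases hj : h j = 0
  · simp only [hj, smul_zero]
  · rw [hfiber j hj]

namespace SimpleGraph

variable (Γ : SimpleGraph V) [DecidableRel Γ.Adj] (p : V → ι)

def liftAlong [Zero M] (g : ι → ι → M) (u v : V) : M :=
  if Γ.Adj u v then g (p u) (p v) else 0

variable {Γ p}

theorem liftAlong_of_adj [Zero M] {g : ι → ι → M} {u v : V} (h : Γ.Adj u v) :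
    Γ.liftAlong p g u v = g (p u) (p v) :=
  if_pos h

theorem liftAlong_of_not_adj [Zero M] {g : ι → ι → M} {u v : V} (h : ¬ Γ.Adj u v) :
    Γ.liftAlong p g u v = 0 :=
  if_neg h

theorem liftAlong_antisymm [SubtractionMonoid M] {g : ι → ι → M} (hg : ∀ i j, g i j = -g j i)
    (u v : V) : Γ.liftAlong p g u v = -Γ.liftAlong p g v u := by
  by_cases h : Γ.Adj u v
  · rw [liftAlong_of_adj h, liftAlong_of_adj h.symm, hg]
  · rw [liftAlong_of_not_adj h, liftAlong_of_not_adj (mt Adj.symm h), neg_zero]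

theorem sum_liftAlong [Fintype V] [Fintype ι] [DecidableEq ι] [AddCommMonoid M]
    {g : ι → ι → M} {u : V} {t : ℕ}
    (hfiber : ∀ j, g (p u) j ≠ 0 → #{v | Γ.Adj u v ∧ p v = j} = t) :
    ∑ v, Γ.liftAlong p g u v = t • ∑ j, g (p u) j := by
  unfold liftAlong
  rw [← sum_filter]
  refine sum_comp_eq_nsmul_sum _ p (g (p u)) t fun j hj => ?_
  rw [filter_filter]
  exact hfiber j hj

end SimpleGraph

end

theorem multicover_flow_general {V ι : Type*} [Fintype V] [Fintype ι]
    (k : ℕ)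
    (Γ : SimpleGraph V) (Sg : SimpleGraph ι) (p : V → ι)
    (hquot : ∀ i j, Sg.Adj i j ↔ i ≠ j ∧ ∃ u v, Γ.Adj u v ∧ p u = i ∧ p v = j)
    (hind : ∀ u v, Γ.Adj u v → p u ≠ p v)
    (t : ℕ)
    (hreg : ∀ u : V, ∀ j : ι, Sg.Adj (p u) j → Set.ncard {v | Γ.Adj u v ∧ p v = j} = t)
    (hflow : HasNowhereZeroFlow Sg k) :
    HasNowhereZeroFlow Γ k := by
  classical
  obtain ⟨g, hskew, hzero, hnz, hsum⟩ := hflow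
  have hadj : ∀ u v, Γ.Adj u v → Sg.Adj (p u) (p v) := fun u v h =>
    (hquot _ _).2 ⟨hind u v h, u, v, h, rfl, rfl⟩
  refine ⟨Γ.liftAlong p g, SimpleGraph.liftAlong_antisymm hskew,
    fun u v h => SimpleGraph.liftAlong_of_not_adj h,
    fun u v h => SimpleGraph.liftAlong_of_adj (g := g) h ▸ hnz _ _ (hadj u v h), fun u => ?_⟩
  have hfiber : ∀ j, g (p u) j ≠ 0 → #{v | Γ.Adj u v ∧ p v = j} = t := fun j hj => by
    rw [← hreg u j (not_imp_comm.1 (hzero _ _) hj), Set.ncard_eq_toFinset_card',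
      Set.toFinset_ofPred]
  rw [SimpleGraph.sum_liftAlong hfiber, hsum, smul_zero]

/-- If a graph `Sg` admits a nowhere-zero `k`-flow (`k ≥ 2`), then every multicover
`Γ` of `Sg` admits a nowhere-zero `k`-flow.  Here `p : V → ι` is the partition map,
`Sg` is the quotient graph of `Γ` with respect to the fibres of `p`, every fibre is
an independent set, and for every adjacent pair of blocks the bipartite graph between
them is `t`-regular for a constant `t ≥ 1`. -/
theorem multicover_flow {V ι : Type*} [Fintype V] [Fintype ι]
    (k : ℕ) (hk : 2 ≤ k)
    (Γ : SimpleGraph V) (Sg : SimpleGraph ι) (p : V → ι)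
    (hsurj : Function.Surjective p)
    (hquot : ∀ i j, Sg.Adj i j ↔ i ≠ j ∧ ∃ u v, Γ.Adj u v ∧ p u = i ∧ p v = j)
    (hind : ∀ u v, Γ.Adj u v → p u ≠ p v)
    (t : ℕ) (ht : 1 ≤ t)
    (hreg : ∀ u : V, ∀ j : ι, Sg.Adj (p u) j → Set.ncard {v | Γ.Adj u v ∧ p v = j} = t)
    (hflow : HasNowhereZeroFlow Sg k) :
    HasNowhereZeroFlow Γ k :=
  multicover_flow_general k Γ Sg p hquot hind t hreg hflow
end

section
/- Every regular bipartite graph of valency at least 2 admits a nowhere-zero 3-flow. -/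
open Finset Function

namespace SimpleGraph

variable {V : Type*} [Fintype V] {G : SimpleGraph V}

section Matchings

variable [DecidableRel G.Adj] {d : ℕ}

theorem IsRegularOfDegree.ncard_le_ncard_iUnion_neighborSet (hG : G.IsRegularOfDegree d)
    (hd : 0 < d) (s : Set V) : s.ncard ≤ (⋃ x ∈ s, G.neighborSet x).ncard := by
  classical
  set N := s.toFinset.biUnion fun x ↦ G.neighborFinset x
  have hN : (⋃ x ∈ s, G.neighborSet x) = (N : Set V) := by ext; simp [N]
  rw [hN, Set.ncard_coe_finset, Set.ncard_eq_toFinset_card']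
  refine Nat.le_of_mul_le_mul_right (card_mul_le_card_mul G.Adj (fun a ha ↦ ?_) fun b _ ↦ ?_) hd
  · rw [← hG a, ← card_neighborFinset_eq_degree]
    refine card_le_card fun b hb ↦ ?_
    simp only [mem_neighborFinset] at hb
    simpa [bipartiteAbove, N, hb] using ⟨a, by simpa using ha, hb⟩
  · rw [← hG b, ← card_neighborFinset_eq_degree]
    refine card_le_card fun a ha ↦ ?_
    simpa [bipartiteBelow, adj_comm] using (mem_filter.mp ha).2

theorem IsBipartiteWith.exists_isPerfectMatching_of_isRegularOfDegree {s t : Set V}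
    (hst : G.IsBipartiteWith s t) (hG : G.IsRegularOfDegree d) (hd : 0 < d) :
    ∃ M : G.Subgraph, M.IsPerfectMatching :=
  exists_isPerfectMatching_of_forall_ncard_le hst (hG.ncard_le_ncard_iUnion_neighborSet hd)

theorem IsRegularOfDegree.sdiff_spanningCoe {M : G.Subgraph} (hM : M.IsPerfectMatching)
    [DecidableRel (G \ M.spanningCoe).Adj] (hG : G.IsRegularOfDegree (d + 1)) :
    (G \ M.spanningCoe).IsRegularOfDegree d := by
  classical
  intro v
  obtain ⟨w, hvw, hw⟩ := Subgraph.isPerfectMatching_iff.mp hM v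
  have hN : (G \ M.spanningCoe).neighborFinset v = (G.neighborFinset v).erase w := by
    ext u
    simp only [mem_neighborFinset, mem_erase, sdiff_adj, Subgraph.spanningCoe_adj]
    exact ⟨fun ⟨hu, hMu⟩ ↦ ⟨fun h ↦ hMu (h ▸ hvw), hu⟩, fun ⟨hu, hG⟩ ↦ ⟨hG, fun h ↦ hu (hw u h)⟩⟩
  rw [← card_neighborFinset_eq_degree, hN,
    card_erase_of_mem ((mem_neighborFinset ..).mpr (M.adj_sub hvw)), card_neighborFinset_eq_degree,
    hG v, Nat.add_sub_cancel]

theorem IsBipartiteWith.exists_decomposition_into_perfectMatchings {s t : Set V}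
    (hst : G.IsBipartiteWith s t) (hG : G.IsRegularOfDegree d) :
    ∃ M : Fin d → SimpleGraph V,
      (∀ i v, ∃! w, (M i).Adj v w) ∧ Pairwise (Disjoint on M) ∧ ⨆ i, M i = G := by
  induction d generalizing G with
  | zero =>
    refine ⟨Fin.elim0, fun i ↦ i.elim0, fun i ↦ i.elim0, ?_⟩
    ext u v
    simpa [iSup_adj] using fun h ↦ (G.degree_pos_iff_exists_adj u).mpr ⟨v, h⟩ |>.ne' (hG u)
  | succ d ih =>
    obtain ⟨M₀, hM₀⟩ := hst.exists_isPerfectMatching_of_isRegularOfDegree hG d.succ_pos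
    classical
    obtain ⟨M, hM, hdisj, hsup⟩ :=
      ih (G := G \ M₀.spanningCoe) ⟨hst.disjoint, fun _ _ h ↦ hst.mem_of_adj h.1⟩
        (hG.sdiff_spanningCoe hM₀)
    have hM₀M (j) : Disjoint M₀.spanningCoe (M j) :=
      disjoint_sdiff_self_right.mono_right (hsup ▸ le_iSup M j)
    refine ⟨Fin.cons M₀.spanningCoe M, Fin.forall_fin_succ.mpr ⟨?_, ?_⟩,
      pairwise_fin_succ_iff.mpr ⟨fun j ↦ ?_, fun j ↦ ?_, fun i j hij ↦ ?_⟩, ?_⟩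
    · simpa using Subgraph.isPerfectMatching_iff.mp hM₀
    · simpa using hM
    · simpa [onFun] using (hM₀M j).symm
    · simpa [onFun] using hM₀M j
    · simpa [onFun] using hdisj hij
    · ext u v
      simp only [iSup_adj, Fin.exists_fin_succ, Fin.cons_zero, Fin.cons_succ]
      rw [← iSup_adj (f := M), hsup, sdiff_adj, Subgraph.spanningCoe_adj]
      have hM₀G : M₀.Adj u v → G.Adj u v := M₀.adj_sub
      tauto

end Matchings

section Flows

variable {s t : Set V} {k : ℕ}

theorem IsBipartiteWith.hasNowhereZeroFlow_of_symmetric (hst : G.IsBipartiteWith s t)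
    (w : V → V → ℤ) (hsymm : ∀ u v, w u v = w v u) (hzero : ∀ u v, ¬G.Adj u v → w u v = 0)
    (hadj : ∀ u v, G.Adj u v → w u v ≠ 0 ∧ |w u v| < k) (hsum : ∀ u, ∑ v, w u v = 0) :
    HasNowhereZeroFlow G k := by
  classical
  refine ⟨fun u v ↦ if u ∈ s then w u v else -w u v, fun u v ↦ ?_, fun u v huv ↦ ?_,
    fun u v huv ↦ ?_, fun u ↦ ?_⟩
  · by_cases huv : G.Adj u v
    · have hs : u ∈ s ↔ v ∉ s := by
        rcases hst.mem_of_adj huv with ⟨hu, hv⟩ | ⟨hu, hv⟩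
        · simp [hu, hst.disjoint.notMem_of_mem_right hv]
        · simp [hv, hst.disjoint.notMem_of_mem_right hu]
      by_cases hu : u ∈ s <;> simp [hu, hs.mp, hs.not_left.mp, hsymm u v]
    · simp [hzero u v huv, hzero v u fun h ↦ huv h.symm]
  · simp [hzero u v huv]
  · by_cases hu : u ∈ s <;> simpa [hu] using hadj u v huv
  · by_cases hu : u ∈ s <;> simp [hu, hsum u]

theorem IsBipartiteWith.hasNowhereZeroFlow_of_decomposition {ι : Type*} [Fintype ι]
    (hst : G.IsBipartiteWith s t) (M : ι → SimpleGraph V) (hM : ∀ i v, ∃! w, (M i).Adj v w)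
    (hdisj : Pairwise (Disjoint on M)) (hsup : ⨆ i, M i = G) (c : ι → ℤ)
    (hc : ∀ i, c i ≠ 0 ∧ |c i| < k) (hcsum : ∑ i, c i = 0) : HasNowhereZeroFlow G k := by
  classical
  refine hst.hasNowhereZeroFlow_of_symmetric (fun u v ↦ ∑ i, if (M i).Adj u v then c i else 0)
    (fun u v ↦ by simp only [adj_comm]) (fun u v huv ↦ ?_) (fun u v huv ↦ ?_) fun u ↦ ?_
  · refine sum_eq_zero fun i _ ↦ if_neg fun h ↦ huv ?_
    exact hsup ▸ iSup_adj.mpr ⟨i, h⟩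
  · obtain ⟨i, hi⟩ := iSup_adj.mp (hsup ▸ huv : (⨆ i, M i).Adj u v)
    rw [Fintype.sum_eq_single i fun j hji ↦ if_neg (disjoint_left.mp (hdisj hji.symm) u v hi),
      if_pos hi]
    exact hc i
  · rw [sum_comm]
    refine (sum_congr rfl fun i _ ↦ ?_).trans hcsum
    obtain ⟨w, hw, huniq⟩ := hM i u
    rw [Fintype.sum_eq_single w fun v hv ↦ if_neg fun h ↦ hv (huniq v h), if_pos hw]

end Flows

end SimpleGraph

theorem exists_fin_sum_eq_zero_ne_zero_abs_lt_three {d : ℕ} (hd : 2 ≤ d) :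
    ∃ c : Fin d → ℤ, (∀ i, c i ≠ 0 ∧ |c i| < 3) ∧ ∑ i, c i = 0 := by
  refine ⟨fun i ↦ (-1) ^ (i : ℕ) - if Odd d ∧ i = ⟨1, hd⟩ then 1 else 0, fun i ↦ ?_, ?_⟩
  · by_cases h : Odd d ∧ i = ⟨1, hd⟩
    · simp only [h, and_self, if_true]
      norm_num
    · rcases neg_one_pow_eq_or ℤ (i : ℕ) with h' | h' <;> simp [h, h']
  · rw [sum_sub_distrib, Fin.sum_neg_one_pow]
    rcases Nat.even_or_odd d with h | h
    · simp [h, Nat.not_odd_iff_even.mpr h]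
    · simp [h, Nat.not_even_iff_odd.mpr h]

theorem regular_bipartite_three_flow_general {V : Type*} [Fintype V]
    (Γ : SimpleGraph V) [DecidableRel Γ.Adj]
    (A : Set V) (hbip : ∀ u v, Γ.Adj u v → (u ∈ A ↔ v ∉ A))
    (d : ℕ) (hreg : ∀ v, Γ.degree v = d) (hd : 2 ≤ d) :
    HasNowhereZeroFlow Γ 3 := by
  have hA : Γ.IsBipartiteWith A Aᶜ :=
    ⟨disjoint_compl_right, fun u v huv ↦ (em (u ∈ A)).imp (fun hu ↦ ⟨hu, (hbip u v huv).mp hu⟩)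
      fun hu ↦ ⟨hu, not_not.mp (mt (hbip u v huv).mpr hu)⟩⟩
  obtain ⟨M, hM, hdisj, hsup⟩ := hA.exists_decomposition_into_perfectMatchings hreg
  obtain ⟨c, hc, hcsum⟩ := exists_fin_sum_eq_zero_ne_zero_abs_lt_three hd
  exact hA.hasNowhereZeroFlow_of_decomposition M hM hdisj hsup c hc hcsum

/-- Every regular bipartite graph of valency at least `2` admits a nowhere-zero 3-flow. -/
theorem regular_bipartite_three_flow {V : Type*} [Fintype V] [DecidableEq V]
    (Γ : SimpleGraph V) [DecidableRel Γ.Adj]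
    (A : Set V) (hbip : ∀ u v, Γ.Adj u v → (u ∈ A ↔ v ∉ A))
    (d : ℕ) (hreg : ∀ v, Γ.degree v = d) (hd : 2 ≤ d) :
    HasNowhereZeroFlow Γ 3 :=
  regular_bipartite_three_flow_general Γ A hbip d hreg hd
end

section
/- If Γ is a graph that is both G-vertex-transitive and G-edge-transitive and Γ is regular of odd valency, then Γ is G-arc-transitive. -/
/-!
By edge-transitivity every arc is mapped either to `(u', v')` or to `(v', u')`, so it suffices that
each arc `(u, v)` can be reversed by some `g`. If it cannot, the `G`-orbit of `(u, v)` orients every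
edge in exactly one direction. By vertex-transitivity all out-degrees then equal some `c`; the
in-degrees have the same sum as the out-degrees, so summing `d = out + in` over the vertices
gives `d = 2c`.
-/

open Finset MulAction

theorem MulAction.smul_mem_orbit_iff {G α : Type*} [Group G] [MulAction G α] (g : G) (p q : α) :
    g • q ∈ orbit G p ↔ q ∈ orbit G p := by
  rw [← orbit_eq_iff, orbit_smul, orbit_eq_iff]

theorem card_filter_smul_eq {G V : Type*} [Group G] [MulAction G V] [Fintype V]
    {R : V → V → Prop} [DecidableRel R] (hR : ∀ (g : G) x y, R (g • x) (g • y) ↔ R x y)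
    (g : G) (x : V) : #{y | R (g • x) y} = #{y | R x y} :=
  card_nbij' (g⁻¹ • ·) (g • ·)
    (fun y hy => by
      simp only [coe_filter, mem_univ, true_and, Set.mem_ofPred_eq] at hy ⊢
      rwa [← hR g, smul_inv_smul])
    (fun y hy => by
      simp only [coe_filter, mem_univ, true_and, Set.mem_ofPred_eq] at hy ⊢
      rwa [hR g])
    (fun y _ => smul_inv_smul g y) (fun y _ => inv_smul_smul g y)

theorem SimpleGraph.IsRegularOfDegree.eq_two_mul_of_orientation {V : Type*} [Fintype V]
    [Nonempty V] {Γ : SimpleGraph V} [DecidableRel Γ.Adj] {d : ℕ} (hreg : Γ.IsRegularOfDegree d)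
    (R : V → V → Prop) [DecidableRel R] (hadj : ∀ x y, Γ.Adj x y ↔ R x y ∨ R y x)
    (hasymm : ∀ x y, R x y → ¬R y x) {c : ℕ} (hout : ∀ x, #{y | R x y} = c) : d = 2 * c := by
  classical
  have hdeg : ∀ x, d = #{y | R x y} + #{y | R y x} := fun x => by
    rw [← hreg x, ← card_neighborFinset_eq_degree, neighborFinset_eq_filter]
    simp only [hadj, filter_or]
    exact card_union_of_disjoint (disjoint_filter.2 fun y _ => hasymm x y)
  have hin : ∑ x, #{y | R y x} = ∑ x, #{y | R x y} :=
    (sum_card_bipartiteAbove_eq_sum_card_bipartiteBelow R).symm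
  have : Fintype.card V * d = Fintype.card V * (2 * c) := calc
    Fintype.card V * d = ∑ x, (#{y | R x y} + #{y | R y x}) := by simp [← hdeg]
    _ = 2 * ∑ x, #{y | R x y} := by rw [sum_add_distrib, hin, two_mul]
    _ = Fintype.card V * (2 * c) := by simp only [hout, sum_const, card_univ, smul_eq_mul]; ring
  exact Nat.eq_of_mul_eq_mul_left Fintype.card_pos this

theorem exists_smul_swap_of_odd_degree {V G : Type*} [Fintype V] [Group G] [MulAction G V]
    (Γ : SimpleGraph V) [DecidableRel Γ.Adj]
    (hAut : ∀ (g : G) (u v : V), Γ.Adj (g • u) (g • v) ↔ Γ.Adj u v)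
    (hvt : ∀ u v : V, ∃ g : G, g • u = v)
    (het : ∀ u v u' v' : V, Γ.Adj u v → Γ.Adj u' v' →
      ∃ g : G, (g • u = u' ∧ g • v = v') ∨ (g • u = v' ∧ g • v = u'))
    {d : ℕ} (hreg : Γ.IsRegularOfDegree d) (hodd : Odd d) {u v : V} (huv : Γ.Adj u v) :
    ∃ g : G, g • u = v ∧ g • v = u := by
  classical
  by_contra hswap
  have : Nonempty V := ⟨u⟩
  let R : V → V → Prop := fun x y => (x, y) ∈ orbit G (u, v)
  have hR : ∀ (g : G) x y, R (g • x) (g • y) ↔ R x y := fun g x y =>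
    smul_mem_orbit_iff g (u, v) (x, y)
  have hadj : ∀ x y, Γ.Adj x y ↔ R x y ∨ R y x := by
    refine fun x y => ⟨fun hxy => ?_, ?_⟩
    · obtain ⟨g, hg | hg⟩ := het u v x y huv hxy
      exacts [Or.inl ⟨g, Prod.ext hg.1 hg.2⟩, Or.inr ⟨g, Prod.ext hg.1 hg.2⟩]
    · rintro (⟨g, hg⟩ | ⟨g, hg⟩) <;> simp only [Prod.ext_iff, Prod.smul_fst, Prod.smul_snd] at hg
      · exact hg.1 ▸ hg.2 ▸ (hAut g u v).2 huv
      · exact hg.2 ▸ hg.1 ▸ ((hAut g u v).2 huv).symm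
  have hasymm : ∀ x y, R x y → ¬R y x := by
    rintro x y ⟨g, hg⟩ ⟨h, hh⟩
    simp only [Prod.ext_iff, Prod.smul_fst, Prod.smul_snd] at hg hh
    exact hswap ⟨g⁻¹ * h, by rw [mul_smul, hh.1, ← hg.2, inv_smul_smul],
      by rw [mul_smul, hh.2, ← hg.1, inv_smul_smul]⟩
  have hout : ∀ x, #{y | R x y} = #{y | R u y} := fun x => by
    obtain ⟨g, rfl⟩ := hvt u x
    exact card_filter_smul_eq hR g u
  rw [hreg.eq_two_mul_of_orientation R hadj hasymm hout] at hodd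
  exact Nat.not_odd_iff_even.2 (even_two_mul _) hodd

theorem vt_et_odd_implies_at_general {V G : Type*} [Fintype V] [Group G]
    [MulAction G V]
    (Γ : SimpleGraph V) [DecidableRel Γ.Adj]
    (hAut : ∀ (g : G) (u v : V), Γ.Adj (g • u) (g • v) ↔ Γ.Adj u v)
    (hvt : ∀ u v : V, ∃ g : G, g • u = v)
    (het : ∀ u v u' v' : V, Γ.Adj u v → Γ.Adj u' v' →
      ∃ g : G, (g • u = u' ∧ g • v = v') ∨ (g • u = v' ∧ g • v = u'))
    (d : ℕ) (hreg : ∀ v, Γ.degree v = d) (hodd : Odd d) :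
    ∀ u v u' v' : V, Γ.Adj u v → Γ.Adj u' v' → ∃ g : G, g • u = u' ∧ g • v = v' := by
  intro u v u' v' huv hu'v'
  obtain ⟨g, hg | hg⟩ := het u v u' v' huv hu'v'
  · exact ⟨g, hg⟩
  · obtain ⟨h, hh⟩ := exists_smul_swap_of_odd_degree Γ hAut hvt het hreg hodd hu'v'
    exact ⟨h * g, by rw [mul_smul, hg.1, hh.2], by rw [mul_smul, hg.2, hh.1]⟩

/-- If a finite graph `Γ` is both `G`-vertex-transitive and `G`-edge-transitive and is
regular of odd valency, then `Γ` is `G`-arc-transitive. -/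
theorem vt_et_odd_implies_at {V G : Type*} [Fintype V] [DecidableEq V] [Group G]
    [MulAction G V]
    (Γ : SimpleGraph V) [DecidableRel Γ.Adj]
    (hAut : ∀ (g : G) (u v : V), Γ.Adj (g • u) (g • v) ↔ Γ.Adj u v)
    (hvt : ∀ u v : V, ∃ g : G, g • u = v)
    (het : ∀ u v u' v' : V, Γ.Adj u v → Γ.Adj u' v' →
      ∃ g : G, (g • u = u' ∧ g • v = v') ∨ (g • u = v' ∧ g • v = u'))
    (d : ℕ) (hreg : ∀ v, Γ.degree v = d) (hodd : Odd d) :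
    ∀ u v u' v' : V, Γ.Adj u v → Γ.Adj u' v' → ∃ g : G, g • u = u' ∧ g • v = v' :=
  vt_et_odd_implies_at_general Γ hAut hvt het d hreg hodd
end
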